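/- arXiv:1508.05967 — 6 statements merged into one kernel-verified Lean document; each statement's English description precedes it below -/
import Mathlib

section
/- Let P_k = 2·3^k + 1. Then for every integer k ≥ 1, the Hausdorff dimension of C(1, P_k) satisfies dim_H(C(1, P_k)) ≥ (1/13)·(log 2 / log 3). -/
open MeasureTheory

noncomputable section

/-- The 3-adic Cantor set: 3-adic integers whose 3-adic expansion uses only digits 0 and 1. -/
def Sigma3 : Set ℤ_[3] :=
  {x | ∃ a : ℕ → ℕ, (∀ i, a i ≤ 1) ∧ x = ∑' i, (a i : ℤ_[3]) * 3 ^ i}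

/-- `C1 M = C(1, M) = {x : x ∈ Σ and M·x ∈ Σ}`. -/
def C1 (M : ℕ) : Set ℤ_[3] :=
  {x | x ∈ Sigma3 ∧ (M : ℤ_[3]) * x ∈ Sigma3}

/-!
For a `0/1` digit sequence `a`, the product `(2 * 3 ^ k + 1) * ∑ aᵢ 3ⁱ`, written as
`(1 + 3 ^ (k + 1) - 3 ^ k) * ∑ aᵢ 3ⁱ`, has the digits `aᵢ + aᵢ₋ₖ₋₁ - aᵢ₋ₖ`, which stay in `{0, 1}`
as soon as every change of digit in `a` is repeated `k` places later. Such sequences can carry a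
free bit in every `13` places: for `k ≤ 12` take constant blocks of length `k + 1`; for larger `k`
fill each period of length `k - 1` with chains `1 1 x 0 0` (`x` the free bit), which a shift by
`k` moves one place along the next period. Two such numbers whose bits first differ at `n` are at
`3`-adic distance at least a constant times `3 ^ (-13 n)`, so reading the bits as a binary number
`0.b₀b₁…` is a Hölder map of exponent `log 2 / (13 log 3)` from a subset of
`C(1, 2 * 3 ^ k + 1)` onto `[0, 1]`.
-/

open PiNat
open scoped NNReal ENNReal

def delay (n : ℕ) (d : ℕ → ℕ) (i : ℕ) : ℕ := if n ≤ i then d (i - n) else 0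

theorem delay_add (m n : ℕ) (d : ℕ → ℕ) : delay (m + n) d = delay m (delay n d) := by
  funext i
  simp only [delay]
  split_ifs <;> grind

theorem PiNat.firstDiff_le_of_apply_ne {E : ℕ → Type*} {x y : ∀ n, E n} {n : ℕ}
    (h : x n ≠ y n) : firstDiff x y ≤ n :=
  not_lt.mp fun hlt ↦ h (apply_eq_of_lt_firstDiff hlt)

def PadicInt.ofDigits (p : ℕ) [Fact p.Prime] (d : ℕ → ℕ) : ℤ_[p] :=
  ∑' i, (d i : ℤ_[p]) * p ^ i

namespace PadicInt

variable {p : ℕ} [Fact p.Prime]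

theorem summable_mul_pow (c : ℕ → ℤ_[p]) : Summable fun i ↦ c i * (p : ℤ_[p]) ^ i := by
  refine Summable.of_norm_bounded (g := fun i ↦ ((p : ℝ)⁻¹) ^ i)
    (summable_geometric_of_lt_one (by positivity)
      (inv_lt_one_of_one_lt₀ (mod_cast (Fact.out : p.Prime).one_lt))) fun i ↦ ?_
  rw [norm_mul, norm_pow, norm_p]
  exact mul_le_of_le_one_left (by positivity) (norm_le_one _)

theorem ofDigits_add (d e : ℕ → ℕ) : ofDigits p (d + e) = ofDigits p d + ofDigits p e := by
  simp only [ofDigits, Pi.add_apply, Nat.cast_add, add_mul]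
  exact (summable_mul_pow _).tsum_add (summable_mul_pow _)

theorem ofDigits_eq_sum_add (d : ℕ → ℕ) (n : ℕ) :
    ofDigits p d = ∑ i ∈ Finset.range n, (d i : ℤ_[p]) * p ^ i +
      p ^ n * ofDigits p (fun i ↦ d (i + n)) := by
  rw [ofDigits, ofDigits, ← (summable_mul_pow _).sum_add_tsum_nat_add n,
    ← (summable_mul_pow _).tsum_mul_left]
  exact congrArg _ (tsum_congr fun i ↦ by ring)

theorem ofDigits_delay (n : ℕ) (d : ℕ → ℕ) : ofDigits p (delay n d) = p ^ n * ofDigits p d := by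
  rw [ofDigits_eq_sum_add _ n, Finset.sum_eq_zero fun i hi ↦ by
    simp [delay, Finset.mem_range.mp hi]]
  simp [delay]

theorem norm_natCast_sub_eq_one {a b : ℕ} (ha : a < p) (hb : b < p) (hab : a ≠ b) :
    ‖(a - b : ℤ_[p])‖ = 1 := by
  refine le_antisymm (norm_le_one _) (not_lt.mp fun hlt ↦ hab ?_)
  have hdvd : (p : ℤ) ∣ (a - b : ℤ) := norm_intCast_lt_one_iff.mp (by push_cast; exact hlt)
  have := Int.eq_zero_of_abs_lt_dvd hdvd (abs_sub_lt_iff.mpr ⟨by omega, by omega⟩)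
  omega

theorem norm_ofDigits_sub {d e : ℕ → ℕ} (hd : ∀ i, d i < p) (he : ∀ i, e i < p) (hne : d ≠ e) :
    ‖ofDigits p d - ofDigits p e‖ = ((p : ℝ) ^ firstDiff d e)⁻¹ := by
  set n := firstDiff d e
  have hsplit (f : ℕ → ℕ) : ofDigits p f = ∑ i ∈ Finset.range n, (f i : ℤ_[p]) * p ^ i +
      p ^ n * (f n + p * ofDigits p (fun i ↦ f (i + 1 + n))) := by
    rw [ofDigits_eq_sum_add f n, ofDigits_eq_sum_add _ 1]
    simp
  have hprefix : ∑ i ∈ Finset.range n, (d i : ℤ_[p]) * p ^ i =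
      ∑ i ∈ Finset.range n, (e i : ℤ_[p]) * p ^ i :=
    Finset.sum_congr rfl fun i hi ↦ by rw [apply_eq_of_lt_firstDiff (Finset.mem_range.mp hi)]
  have hdiff : ofDigits p d - ofDigits p e = p ^ n * ((d n - e n : ℤ_[p]) +
      p * (ofDigits p (fun i ↦ d (i + 1 + n)) - ofDigits p (fun i ↦ e (i + 1 + n)))) := by
    rw [hsplit d, hsplit e, hprefix]
    ring
  have hhead := norm_natCast_sub_eq_one (hd n) (he n) (apply_firstDiff_ne hne)
  have htail : ‖(p : ℤ_[p]) * (ofDigits p (fun i ↦ d (i + 1 + n)) -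
      ofDigits p (fun i ↦ e (i + 1 + n)))‖ < 1 := by
    rw [norm_mul, norm_p]
    exact (mul_le_of_le_one_right (by positivity) (norm_le_one _)).trans_lt
      (inv_lt_one_of_one_lt₀ (mod_cast (Fact.out : p.Prime).one_lt))
  rw [hdiff, norm_mul, norm_pow, norm_p, norm_add_eq_max_of_ne (by rw [hhead]; exact htail.ne'),
    hhead, max_eq_left htail.le, mul_one, inv_pow]

end PadicInt

open PadicInt

theorem ofDigits_mem_Sigma3 {a : ℕ → ℕ} (ha : ∀ i, a i ≤ 1) : ofDigits 3 a ∈ Sigma3 :=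
  ⟨a, ha, by simp [ofDigits]⟩

theorem ofDigits_mem_C1 {k : ℕ} {a : ℕ → ℕ} (ha : ∀ i, a i ≤ 1)
    (hrep : ∀ j, a j ≠ delay 1 a j → a (j + k) = a j) : ofDigits 3 a ∈ C1 (2 * 3 ^ k + 1) := by
  have hcase (i : ℕ) : delay k a i = delay (k + 1) a i ∨ a i = delay k a i := by
    rw [delay_add]
    by_cases hki : k ≤ i
    · simp only [delay, if_pos hki]
      by_cases hj : a (i - k) = delay 1 a (i - k)
      · exact .inl hj
      · exact .inr (by simpa [Nat.sub_add_cancel hki] using hrep (i - k) hj)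
    · simp [delay, hki]
  have hle (n i : ℕ) : delay n a i ≤ 1 := by unfold delay; split_ifs <;> simp [ha]
  set b : ℕ → ℕ := fun i ↦ a i + delay (k + 1) a i - delay k a i
  have hb (i : ℕ) : b i + delay k a i = a i + delay (k + 1) a i ∧ b i ≤ 1 := by
    have := hcase i
    have := ha i
    have := hle k i
    have := hle (k + 1) i
    simp only [b]
    omega
  refine ⟨ofDigits_mem_Sigma3 ha, ?_⟩
  convert ofDigits_mem_Sigma3 fun i ↦ (hb i).2 using 1
  have := congrArg (ofDigits 3) (funext fun i ↦ (hb i).1 : b + delay k a = a + delay (k + 1) a)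
  rw [ofDigits_add, ofDigits_add, ofDigits_delay, ofDigits_delay] at this
  push_cast
  linear_combination -this

theorem holderOnWith_of_dist_le {X Y : Type*} [PseudoMetricSpace X] [PseudoMetricSpace Y]
    {C r : ℝ≥0} {f : X → Y} {s : Set X}
    (h : ∀ x ∈ s, ∀ y ∈ s, dist (f x) (f y) ≤ C * dist x y ^ (r : ℝ)) :
    HolderOnWith C r f s := fun x hx y hy ↦ by
  rw [edist_dist, edist_dist, ENNReal.ofReal_rpow_of_nonneg dist_nonneg r.coe_nonneg,
    ← ENNReal.ofReal_coe_nnreal, ← ENNReal.ofReal_mul C.coe_nonneg]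
  exact ENNReal.ofReal_le_ofReal (h x hx y hy)

theorem rpow_log_div_log_inv {θ x : ℝ} (hθ₀ : 0 < θ) (hθ₁ : θ ≠ 1) (hx : 0 < x) :
    θ ^ (Real.log x / Real.log θ⁻¹) = x⁻¹ := by
  have := Real.log_ne_zero_of_pos_of_ne_one hθ₀ hθ₁
  rw [Real.rpow_def_of_pos hθ₀, Real.log_inv, ← Real.exp_log (inv_pos.mpr hx), Real.log_inv]
  field_simp

theorem le_dimH_range_of_le_dist {X : Type*} [MetricSpace X] (F : (ℕ → Fin 2) → X) {C θ : ℝ}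
    (hC : 0 < C) (hθ₀ : 0 < θ) (hθ₁ : θ < 1)
    (hF : ∀ b b', b ≠ b' → C * θ ^ firstDiff b b' ≤ dist (F b) (F b')) :
    ENNReal.ofReal (Real.log 2 / Real.log θ⁻¹) ≤ dimH (Set.range F) := by
  have hlogθ : 0 < -Real.log θ := by simpa using Real.log_pos ((one_lt_inv₀ hθ₀).mpr hθ₁)
  set σ := Real.log 2 / Real.log θ⁻¹
  have hσ : 0 < σ := by simp only [σ, Real.log_inv]; positivity
  have hθσ : θ ^ σ = 2⁻¹ := rpow_log_div_log_inv hθ₀ hθ₁.ne two_pos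
  have hinj : F.Injective := fun b b' h ↦ by
    by_contra hne
    have := hF b b' hne
    rw [h, dist_self] at this
    exact (mul_pos hC (pow_pos hθ₀ _)).not_ge this
  set g : X → ℝ := fun x ↦ Real.ofDigits (Function.invFun F x)
  have hg (b : ℕ → Fin 2) : g (F b) = Real.ofDigits b := by
    simp only [g, Function.leftInverse_invFun hinj b]
  have hholder : HolderOnWith (C ^ (-σ)).toNNReal σ.toNNReal g (Set.range F) := by
    refine holderOnWith_of_dist_le ?_
    rintro _ ⟨b, rfl⟩ _ ⟨b', rfl⟩
    rw [hg, hg, Real.dist_eq, Real.coe_toNNReal _ (by positivity), Real.coe_toNNReal _ hσ.le]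
    rcases eq_or_ne b b' with rfl | hne
    · simp only [sub_self, abs_zero]
      positivity
    calc |Real.ofDigits b - Real.ofDigits b'|
        ≤ ((2 : ℝ) ^ firstDiff b b')⁻¹ := by
          simpa using Real.abs_ofDigits_sub_ofDigits_le (n := firstDiff b b')
            fun i hi ↦ apply_eq_of_lt_firstDiff (x := b) (y := b') hi
      _ = C ^ (-σ) * (C * θ ^ firstDiff b b') ^ σ := by
          rw [Real.mul_rpow hC.le (by positivity), ← Real.rpow_pow_comm hθ₀.le, hθσ,
            Real.rpow_neg hC.le, inv_mul_cancel_left₀ (by positivity), inv_pow]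
      _ ≤ C ^ (-σ) * dist (F b) (F b') ^ σ := by
          gcongr
          exact hF b b' hne
  have hIcc : Set.Icc (0 : ℝ) 1 ⊆ g '' Set.range F := by
    rintro y hy
    obtain ⟨b, -, rfl⟩ := Real.ofDigits_SurjOn (b := 2) (by norm_num) hy
    exact ⟨F b, ⟨b, rfl⟩, hg b⟩
  have hdimIcc : dimH (Set.Icc (0 : ℝ) 1) = 1 := by
    rw [Real.dimH_of_nonempty_interior (by simp)]
    simp
  have := (hdimIcc.symm.trans_le (dimH_mono hIcc)).trans
    (hholder.dimH_image_le (Real.toNNReal_pos.mpr hσ))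
  rwa [ENNReal.le_div_iff_mul_le (.inl (by simpa using hσ)) (.inl ENNReal.coe_ne_top),
    one_mul] at this

theorem le_dimH_C1_of_encoding {k K : ℕ} (a : (ℕ → Fin 2) → ℕ → ℕ) (place : ℕ → ℕ)
    (ha : ∀ b i, a b i ≤ 1) (hrep : ∀ b j, a b j ≠ delay 1 (a b) j → a b (j + k) = a b j)
    (hplace : ∀ b n, a b (place n) = b n) (hplace_le : ∀ n, place n ≤ 13 * n + K) :
    ENNReal.ofReal ((1 / 13) * (Real.log 2 / Real.log 3)) ≤ dimH (C1 (2 * 3 ^ k + 1)) := by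
  have hsep (b b' : ℕ → Fin 2) (hne : b ≠ b') : ((3 : ℝ) ^ K)⁻¹ * ((3 : ℝ) ^ 13)⁻¹ ^ firstDiff b b'
      ≤ dist (ofDigits 3 (a b)) (ofDigits 3 (a b')) := by
    set n := firstDiff b b'
    have hdig : a b (place n) ≠ a b' (place n) := by
      rw [hplace, hplace]
      exact Fin.val_ne_of_ne (apply_firstDiff_ne hne)
    rw [dist_eq_norm, norm_ofDigits_sub (fun i ↦ (ha b i).trans_lt (by norm_num))
      (fun i ↦ (ha b' i).trans_lt (by norm_num)) fun h ↦ hdig (congrFun h _), Nat.cast_ofNat,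
      inv_pow, ← pow_mul, ← _root_.mul_inv, ← pow_add, add_comm]
    gcongr
    · norm_num
    · exact (firstDiff_le_of_apply_ne hdig).trans ((hplace_le n).trans_eq (by ring))
  calc ENNReal.ofReal ((1 / 13) * (Real.log 2 / Real.log 3))
      = ENNReal.ofReal (Real.log 2 / Real.log ((3 : ℝ) ^ 13)⁻¹⁻¹) := by
        rw [inv_inv, Real.log_pow]
        congr 1
        ring
    _ ≤ dimH (Set.range fun b ↦ ofDigits 3 (a b)) :=
        le_dimH_range_of_le_dist _ (by positivity) (by positivity) (by norm_num) hsep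
    _ ≤ dimH (C1 (2 * 3 ^ k + 1)) :=
        dimH_mono (Set.range_subset_iff.mpr fun b ↦ ofDigits_mem_C1 (ha b) (hrep b))

def blockDigits (L : ℕ) (b : ℕ → Fin 2) (i : ℕ) : ℕ := b (i / L)

theorem blockDigits_mul (L : ℕ) (hL : 0 < L) (b : ℕ → Fin 2) (n : ℕ) :
    blockDigits L b (L * n) = b n := by
  rw [blockDigits, Nat.mul_div_cancel_left n hL]

theorem blockDigits_add_of_ne {k L : ℕ} (hkL : k < L) (b : ℕ → Fin 2) (j : ℕ)
    (h : blockDigits L b j ≠ delay 1 (blockDigits L b) j) :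
    blockDigits L b (j + k) = blockDigits L b j := by
  obtain ⟨q, rfl⟩ : L ∣ j := by
    rcases j with _ | j
    · exact dvd_zero L
    by_contra hdvd
    exact h (by simp [blockDigits, delay, Nat.succ_div_of_not_dvd hdvd])
  simp only [blockDigits, Nat.mul_add_div (by omega : 0 < L), Nat.div_eq_of_lt hkL,
    Nat.mul_div_cancel_left q (by omega : 0 < L), add_zero]

def chainPattern (M : ℕ) (b : ℕ → Fin 2) (t r : ℕ) : ℕ :=
  if 5 * M ≤ r then 0 else if r % 5 < 2 then 1 else if r % 5 = 2 then b (M * t + r / 5) else 0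

theorem chainPattern_eq_zero {M : ℕ} (b : ℕ → Fin 2) (t : ℕ) {r : ℕ} (hr : 5 * M ≤ r + 2) :
    chainPattern M b t r = 0 := by
  unfold chainPattern
  split_ifs <;> omega

theorem chainPattern_succ {M : ℕ} (b : ℕ → Fin 2) {t r : ℕ} (t' : ℕ)
    (h : r = 0 ∨ chainPattern M b t r ≠ chainPattern M b t (r - 1)) :
    chainPattern M b t' (r + 1) = chainPattern M b t r := by
  have := (b (M * t + r / 5)).isLt
  have := (b (M * t + (r - 1) / 5)).isLt
  unfold chainPattern at h ⊢
  split_ifs at h ⊢ <;> omega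

def chainDigits (L M : ℕ) (b : ℕ → Fin 2) (i : ℕ) : ℕ := chainPattern M b (i / L) (i % L)

theorem chainDigits_le_one (L M : ℕ) (b : ℕ → Fin 2) (i : ℕ) : chainDigits L M b i ≤ 1 := by
  unfold chainDigits chainPattern
  split_ifs <;> simp [Fin.is_le]

theorem chainDigits_mul_add {L : ℕ} (M : ℕ) (b : ℕ → Fin 2) (t : ℕ) {r : ℕ} (hr : r < L) :
    chainDigits L M b (L * t + r) = chainPattern M b t r := by
  rw [chainDigits, Nat.mul_add_div (by omega), Nat.div_eq_of_lt hr, add_zero, Nat.mul_add_mod,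
    Nat.mod_eq_of_lt hr]

theorem chainDigits_eq_bit {L M : ℕ} (hM : 0 < M) (hML : 5 * M ≤ L) (b : ℕ → Fin 2) (n : ℕ) :
    chainDigits L M b (L * (n / M) + (5 * (n % M) + 2)) = b n := by
  have := Nat.mod_lt n hM
  rw [chainDigits_mul_add _ _ _ (by omega), chainPattern, if_neg (by omega), if_neg (by omega),
    if_pos (by omega), (by omega : (5 * (n % M) + 2) / 5 = n % M), Nat.div_add_mod]

theorem chainDigits_add_of_ne {L M : ℕ} (hM : 0 < M) (hML : 5 * M ≤ L) (b : ℕ → Fin 2) (j : ℕ)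
    (h : chainDigits L M b j ≠ delay 1 (chainDigits L M b) j) :
    chainDigits L M b (j + (L + 1)) = chainDigits L M b j := by
  obtain ⟨t, r, hr, rfl⟩ : ∃ t r, r < L ∧ j = L * t + r :=
    ⟨j / L, j % L, Nat.mod_lt j (by omega), (Nat.div_add_mod j L).symm⟩
  have hprev (hr0 : 0 < r) :
      delay 1 (chainDigits L M b) (L * t + r) = chainPattern M b t (r - 1) := by
    rw [delay, if_pos (by omega), (by omega : L * t + r - 1 = L * t + (r - 1)),
      chainDigits_mul_add _ _ _ (by omega)]
  rw [chainDigits_mul_add _ _ _ hr] at h ⊢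
  rcases (by omega : r + 1 < L ∨ r + 1 = L) with hr1 | hr1
  · rw [(by ring : L * t + r + (L + 1) = L * (t + 1) + (r + 1)), chainDigits_mul_add _ _ _ hr1]
    refine chainPattern_succ b _ ?_
    rcases Nat.eq_zero_or_pos r with hr0 | hr0
    · exact .inl hr0
    · exact .inr (hprev hr0 ▸ h)
  · rw [hprev (by omega), chainPattern_eq_zero _ _ (by omega),
      chainPattern_eq_zero _ _ (by omega)] at h
    exact absurd rfl h

theorem dimH_C1_Pk_ge_general (k : ℕ) :
    ENNReal.ofReal ((1 / 13) * (Real.log 2 / Real.log 3)) ≤ dimH (C1 (2 * 3 ^ k + 1)) := by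
  rcases le_or_gt k 12 with hk | hk
  · exact le_dimH_C1_of_encoding (K := 0) (blockDigits (k + 1)) (fun n ↦ (k + 1) * n)
      (fun b i ↦ (b _).is_le) (blockDigits_add_of_ne k.lt_succ_self)
      (blockDigits_mul _ k.succ_pos) (fun n ↦ by nlinarith)
  · obtain ⟨L, rfl⟩ : ∃ L, k = L + 1 := ⟨k - 1, by omega⟩
    have hM : 0 < L / 5 := by omega
    have hML : 5 * (L / 5) ≤ L := Nat.mul_div_le L 5
    refine le_dimH_C1_of_encoding (K := 2) (chainDigits L (L / 5))
      (fun n ↦ L * (n / (L / 5)) + (5 * (n % (L / 5)) + 2)) (chainDigits_le_one L _)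
      (chainDigits_add_of_ne hM hML) (chainDigits_eq_bit hM hML) fun n ↦ ?_
    have hdiv := Nat.div_add_mod n (L / 5)
    have : L * (n / (L / 5)) ≤ 13 * (L / 5 * (n / (L / 5))) := by
      rw [← mul_assoc]
      exact Nat.mul_le_mul_right _ (by omega)
    omega

/-- For every k ≥ 1, dim_H(C(1, P_k)) ≥ (1/13)·log₃ 2, where P_k = 2·3^k + 1. -/
theorem dimH_C1_Pk_ge (k : ℕ) (hk : 1 ≤ k) :
    ENNReal.ofReal ((1 / 13) * (Real.log 2 / Real.log 3)) ≤ dimH (C1 (2 * 3 ^ k + 1)) :=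
  dimH_C1_Pk_ge_general k

end
end

section
/- Let A be a finite alphabet and n ≥ 1 an integer. If P ⊆ A^ℕ is a path set, then the n-interleaving P^{(*n)} is also a path set. Moreover, if P has a right-resolving presentation (V, v₀, E) with exactly k vertices and m labeled edges, then P^{(*n)} has a right-resolving presentation with exactly k^n vertices and m·k^{n−1} labeled edges. -/
open MeasureTheory ENNReal

noncomputable section

/-- The path set of a pointed labeled graph: sequences of edge labels of infinite
walks starting at `v0`. -/
def PathSetOf {A V : Type*} (E : Set (V × A × V)) (v0 : V) : Set (ℕ → A) :=
  {x | ∃ v : ℕ → V, v 0 = v0 ∧ ∀ i, (v i, x i, v (i + 1)) ∈ E}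

/-- `P` is a path set if it is presented by some pointed labeled graph with a finite
vertex set. -/
def IsPathSet {A : Type*} (P : Set (ℕ → A)) : Prop :=
  ∃ (V : Type) (_ : Fintype V) (v0 : V) (E : Set (V × A × V)), P = PathSetOf E v0

/-- A labeled graph is right-resolving if each vertex has at most one outgoing edge
with any given label. -/
def RightResolving {A V : Type*} (E : Set (V × A × V)) : Prop :=
  ∀ u a w w', (u, a, w) ∈ E → (u, a, w') ∈ E → w = w'

/-- The n-interleaving of a set of sequences. -/
def Interleave {A : Type*} (n : ℕ) (X : Set (ℕ → A)) : Set (ℕ → A) :=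
  {x | ∀ j < n, (fun i => x (j + i * n)) ∈ X}

/-!
A sequence `x` lies in the `N`-interleaving of `PathSetOf E v₀` exactly when one vertex
sequence `u`, equal to `v₀` on `[0, N)`, has every letter `x t` labelling an edge of `E` from
`u t` to `u (t + N)`: the walks of the `N` component sequences merge into `u`. Such a delayed
walk is an ordinary walk in the graph on windows `(u t, …, u (t + N - 1)) ∈ V^N` whose edges
shift the window by one step and read a label of `E` between its two ends. That graph is
right-resolving when `E` is, and an edge of it is an edge of `E` together with the `N - 1`
vertices of the window strictly between its ends.
-/

section WindowGraph

variable {A V : Type*}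

def DelayedPathSet (N : ℕ) (E : Set (V × A × V)) (v0 : V) : Set (ℕ → A) :=
  {x | ∃ u : ℕ → V, (∀ s < N, u s = v0) ∧ ∀ t, (u t, x t, u (t + N)) ∈ E}

theorem interleave_pathSetOf {N : ℕ} (hN : 0 < N) (E : Set (V × A × V)) (v0 : V) :
    Interleave N (PathSetOf E v0) = DelayedPathSet N E v0 := by
  ext x
  constructor
  · intro hx
    choose walk walk_zero walk_edge using fun j : Fin N => hx j j.isLt
    refine ⟨fun s => walk ⟨s % N, Nat.mod_lt s hN⟩ (s / N), fun s hs => ?_, fun t => ?_⟩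
    · simpa [Nat.mod_eq_of_lt hs, Nat.div_eq_of_lt hs] using walk_zero ⟨s, hs⟩
    · simpa [Nat.add_div_right t hN, Nat.mod_add_div'] using
        walk_edge ⟨t % N, Nat.mod_lt t hN⟩ (t / N)
  · rintro ⟨u, hu_init, hu_edge⟩ j hj
    refine ⟨fun i => u (j + i * N), by simpa using hu_init j hj, fun i => ?_⟩
    simpa [add_mul, add_assoc] using hu_edge (j + i * N)

/-- Windows have length `n + 1`: this graph presents the `(n + 1)`-interleaving. -/
def windowGraph (n : ℕ) (E : Set (V × A × V)) :
    Set ((Fin (n + 1) → V) × A × (Fin (n + 1) → V)) :=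
  {e | (e.1 0, e.2.1, e.2.2 (Fin.last n)) ∈ E ∧ ∀ r : Fin n, e.2.2 r.castSucc = e.1 r.succ}

theorem windowGraph_walk_apply {n : ℕ} {E : Set (V × A × V)} {x : ℕ → A}
    {w : ℕ → Fin (n + 1) → V} (hw : ∀ t, (w t, x t, w (t + 1)) ∈ windowGraph n E)
    (r : Fin (n + 1)) (t : ℕ) : w t r = w (t + r) 0 := by
  induction r using Fin.induction generalizing t with
  | zero => rfl
  | succ r ih =>
    have shift : w (t + 1) r.castSucc = w t r.succ := (hw t).2 r
    rw [← shift, ih, Fin.val_succ, Fin.val_castSucc, add_right_comm, add_assoc]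

theorem pathSetOf_windowGraph (n : ℕ) (E : Set (V × A × V)) (v0 : V) :
    PathSetOf (windowGraph n E) (fun _ => v0) = DelayedPathSet (n + 1) E v0 := by
  ext x
  constructor
  · rintro ⟨w, hw_zero, hw_edge⟩
    refine ⟨fun t => w t 0, fun s hs => ?_, fun t => ?_⟩
    · simpa [hw_zero] using (windowGraph_walk_apply hw_edge ⟨s, hs⟩ 0).symm
    · have h := windowGraph_walk_apply hw_edge (Fin.last n) (t + 1)
      rw [Fin.val_last, add_right_comm] at h
      simpa only [← add_assoc, ← h] using (hw_edge t).1
  · rintro ⟨u, hu_init, hu_edge⟩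
    refine ⟨fun t r => u (t + r), funext fun r => by simpa using hu_init r r.isLt,
      fun t => ⟨by simpa [add_assoc, add_comm 1] using hu_edge t, fun r => ?_⟩⟩
    simp [add_assoc, add_comm 1]

theorem windowGraph_rightResolving {n : ℕ} {E : Set (V × A × V)} (hE : RightResolving E) :
    RightResolving (windowGraph n E) := by
  rintro u a w w' ⟨hw, hw_shift⟩ ⟨hw', hw'_shift⟩
  funext r
  induction r using Fin.lastCases with
  | last => exact hE (u 0) a _ _ hw hw'
  | cast r => exact (hw_shift r).trans (hw'_shift r).symm

def windowGraphEquiv (n : ℕ) (E : Set (V × A × V)) :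
    windowGraph n E ≃ E × (Fin n → V) where
  toFun e := (⟨(e.1.1 0, e.1.2.1, e.1.2.2 (Fin.last n)), e.2.1⟩, fun r => e.1.1 r.succ)
  invFun p := ⟨(Fin.cons p.1.1.1 p.2, p.1.1.2.1, Fin.snoc p.2 p.1.1.2.2),
    by simp, fun r => by simp⟩
  left_inv := by
    rintro ⟨⟨u, a, u'⟩, he, hshift⟩
    ext : 1
    refine Prod.ext (Fin.cons_self_tail u) (Prod.ext rfl (funext fun r => ?_))
    induction r using Fin.lastCases with
    | last => simp
    | cast r => simpa using (hshift r).symm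
  right_inv := by
    rintro ⟨⟨⟨v, a, v'⟩, he⟩, mid⟩
    simp

theorem ncard_windowGraph [Fintype V] (n : ℕ) (E : Set (V × A × V)) :
    (windowGraph n E).ncard = E.ncard * Fintype.card V ^ n := by
  rw [← Nat.card_coe_set_eq, Nat.card_congr (windowGraphEquiv n E), Nat.card_prod,
    Nat.card_coe_set_eq, Nat.card_eq_fintype_card, Fintype.card_fun, Fintype.card_fin]

theorem interleave_pathSetOf_eq_windowGraph (n : ℕ) (E : Set (V × A × V)) (v0 : V) :
    Interleave (n + 1) (PathSetOf E v0) = PathSetOf (windowGraph n E) (fun _ => v0) := by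
  rw [interleave_pathSetOf n.succ_pos, pathSetOf_windowGraph]

end WindowGraph

theorem interleave_isPathSet_general {A : Type} (n : ℕ) (hn : 1 ≤ n)
    (P : Set (ℕ → A)) (hP : IsPathSet P) :
    IsPathSet (Interleave n P) ∧
    ∀ (V : Type) (hV : Fintype V) (v0 : V) (E : Set (V × A × V)) (k m : ℕ),
      P = PathSetOf E v0 → RightResolving E →
      @Fintype.card V hV = k → E.ncard = m →
      ∃ (W : Type) (hW : Fintype W) (w0 : W) (F : Set (W × A × W)),
        Interleave n P = PathSetOf F w0 ∧ RightResolving F ∧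
        @Fintype.card W hW = k ^ n ∧ F.ncard = m * k ^ (n - 1) := by
  obtain ⟨n, rfl⟩ : ∃ n', n = n' + 1 := ⟨n - 1, by omega⟩
  constructor
  · obtain ⟨V, hV, v0, E, rfl⟩ := hP
    exact ⟨Fin (n + 1) → V, inferInstance, fun _ => v0, windowGraph n E,
      interleave_pathSetOf_eq_windowGraph n E v0⟩
  · rintro V hV v0 E k m rfl hE rfl rfl
    exact ⟨Fin (n + 1) → V, inferInstance, fun _ => v0, windowGraph n E,
      interleave_pathSetOf_eq_windowGraph n E v0, windowGraph_rightResolving hE, by simp,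
      ncard_windowGraph n E⟩

/-- If P is a path set, so is its n-interleaving; moreover from a right-resolving
presentation with k vertices and m edges one gets a right-resolving presentation of
the interleaving with k^n vertices and m·k^{n−1} edges. -/
theorem interleave_isPathSet {A : Type} [Fintype A] (n : ℕ) (hn : 1 ≤ n)
    (P : Set (ℕ → A)) (hP : IsPathSet P) :
    IsPathSet (Interleave n P) ∧
    ∀ (V : Type) (hV : Fintype V) (v0 : V) (E : Set (V × A × V)) (k m : ℕ),
      P = PathSetOf E v0 → RightResolving E →
      @Fintype.card V hV = k → E.ncard = m →
      ∃ (W : Type) (hW : Fintype W) (w0 : W) (F : Set (W × A × W)),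
        Interleave n P = PathSetOf F w0 ∧ RightResolving F ∧
        @Fintype.card W hW = k ^ n ∧ F.ncard = m * k ^ (n - 1) :=
  interleave_isPathSet_general n hn P hP

end
end

section
/- Let A be a finite alphabet and n ≥ 1 an integer. If P ⊆ A^ℕ is a path set, then the topological entropy of its n-interleaving equals that of P: H_top(P^{(*n)}) = H_top(P). -/
open MeasureTheory ENNReal

noncomputable section

/-- The number of words of length k occurring as blocks of elements of P. -/
def blockCount {A : Type} [Fintype A] (P : Set (ℕ → A)) (k : ℕ) : ℕ :=
  Set.ncard {w : Fin k → A | ∃ x ∈ P, ∃ m : ℕ, ∀ i : Fin k, x (m + (i : ℕ)) = w i}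

/-- Topological entropy: limsup_{k→∞} (1/k)·log N_k(P). -/
def Htop {A : Type} [Fintype A] (P : Set (ℕ → A)) : ℝ :=
  Filter.limsup (fun k : ℕ => Real.log (blockCount P k) / k) Filter.atTop

namespace HtopAux

open Filter

variable {A : Type} [Fintype A]

/-- Blocks of length `k` of a set of sequences. -/
def blocks (P : Set (ℕ → A)) (k : ℕ) : Set (Fin k → A) :=
  {w : Fin k → A | ∃ x ∈ P, ∃ m : ℕ, ∀ i : Fin k, x (m + (i : ℕ)) = w i}

lemma blockCount_eq (P : Set (ℕ → A)) (k : ℕ) : blockCount P k = (blocks P k).ncard := rfl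

/-- Blocks occurring at exact position `c`. -/
def eblocks (P : Set (ℕ → A)) (c L : ℕ) : Set (Fin L → A) :=
  {w : Fin L → A | ∃ x ∈ P, ∀ i : Fin L, x (c + (i : ℕ)) = w i}

lemma blockCount_le_pow (P : Set (ℕ → A)) (k : ℕ) :
    blockCount P k ≤ Fintype.card A ^ k := by
  rw [blockCount_eq]
  calc (blocks P k).ncard ≤ (Set.univ : Set (Fin k → A)).ncard :=
        Set.ncard_le_ncard (Set.subset_univ _) (Set.toFinite _)
    _ = Fintype.card A ^ k := by
        simp [Set.ncard_univ, Nat.card_fun, Nat.card_eq_fintype_card]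

lemma one_le_blockCount {P : Set (ℕ → A)} (h : P.Nonempty) (k : ℕ) :
    1 ≤ blockCount P k := by
  obtain ⟨x, hx⟩ := h
  have hmem : (fun i : Fin k => x (0 + (i : ℕ))) ∈ blocks P k := ⟨x, hx, 0, fun _ => rfl⟩
  rw [blockCount_eq]
  exact (Set.ncard_pos (Set.toFinite _)).2 ⟨_, hmem⟩

lemma interleave_nonempty (n : ℕ) (hn : 1 ≤ n) {P : Set (ℕ → A)} (h : P.Nonempty) :
    (Interleave n P).Nonempty := by
  obtain ⟨x, hx⟩ := h
  refine ⟨fun t => x (t / n), fun j hj => ?_⟩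
  have h2 : (fun i => x ((j + i * n) / n)) = x := by
    funext i
    congr 1
    rw [Nat.add_mul_div_right _ _ (by omega : 0 < n), Nat.div_eq_of_lt hj]
    omega
  convert hx using 2

/-- Upper bound: blocks of the interleaving are determined by an offset and `n` blocks of `P`. -/
lemma count_interleave_le (n : ℕ) (hn : 1 ≤ n) (P : Set (ℕ → A)) (k : ℕ) :
    blockCount (Interleave n P) k ≤ n * blockCount P (k / n + 2) ^ n := by
  classical
  have hn0 : 0 < n := hn
  set L := k / n + 2 with hL
  have hmod : ∀ (d : Fin n) (i : Fin k), ((d : ℕ) + (i : ℕ)) % n < n :=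
    fun d i => Nat.mod_lt _ hn0
  have hdiv : ∀ (d : Fin n) (i : Fin k), ((d : ℕ) + (i : ℕ)) / n < L := by
    intro d i
    obtain ⟨q, r, hqr, hrn, hq⟩ : ∃ q r, n * q + r = k ∧ r < n ∧ k / n = q :=
      ⟨k / n, k % n, Nat.div_add_mod k n, Nat.mod_lt _ hn0, rfl⟩
    rw [Nat.div_lt_iff_lt_mul hn0, hL, hq]
    have hexp : (q + 2) * n = n * q + 2 * n := by ring
    rw [hexp]
    have hd := d.2
    have hi := i.2
    omega
  have main : ∀ w : (blocks (Interleave n P) k),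
      ∃ (d : Fin n) (b : Fin n → (blocks P L)),
      ∀ i : Fin k, (w : Fin k → A) i
        = (b ⟨((d : ℕ) + (i : ℕ)) % n, hmod d i⟩ : Fin L → A)
            ⟨((d : ℕ) + (i : ℕ)) / n, hdiv d i⟩ := by
    rintro ⟨w, y, hy, m, hw⟩
    refine ⟨⟨m % n, Nat.mod_lt _ hn0⟩,
      fun r => ⟨fun j => y ((r : ℕ) + (m / n + (j : ℕ)) * n), ?_⟩, ?_⟩
    · exact ⟨fun i => y ((r : ℕ) + i * n), hy r r.2, m / n, fun j => rfl⟩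
    · intro i
      simp only
      rw [← hw i]
      congr 1
      -- m + i = (m % n + i) % n + (m / n + (m % n + i) / n) * n
      obtain ⟨q, d, hm, hdn⟩ : ∃ q d, m = n * q + d ∧ d < n :=
        ⟨m / n, m % n, ((Nat.div_add_mod m n).symm), Nat.mod_lt _ hn0⟩
      subst hm
      rw [Nat.mul_add_mod, Nat.mod_eq_of_lt hdn, Nat.mul_add_div hn0,
        Nat.div_eq_of_lt hdn, Nat.add_zero]
      obtain ⟨j, r, hdi, hr⟩ : ∃ j r, d + (i : ℕ) = n * j + r ∧ r < n :=
        ⟨(d + (i : ℕ)) / n, (d + (i : ℕ)) % n, ((Nat.div_add_mod _ n).symm),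
          Nat.mod_lt _ hn0⟩
      rw [hdi, Nat.mul_add_mod, Nat.mod_eq_of_lt hr, Nat.mul_add_div hn0,
        Nat.div_eq_of_lt hr, Nat.add_zero]
      have hexp : (q + j) * n = n * q + n * j := by ring
      rw [hexp]
      omega
  choose F1 F2 hF using main
  have hinj : Function.Injective (fun w => (F1 w, F2 w)) := by
    intro w w' hww
    have h1 : F1 w = F1 w' := (Prod.ext_iff.1 hww).1
    have h2 : F2 w = F2 w' := (Prod.ext_iff.1 hww).2
    apply Subtype.ext
    funext i
    rw [hF w i, hF w' i]
    simp only [h1, h2]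
  have hcard := Nat.card_le_card_of_injective _ hinj
  rw [blockCount_eq, blockCount_eq, ← Nat.card_coe_set_eq, ← Nat.card_coe_set_eq]
  refine hcard.trans (le_of_eq ?_)
  rw [Nat.card_prod, Nat.card_fun]
  simp [Nat.card_eq_fintype_card]

/-- Lower bound: tuples of exact-position blocks of `P` inject into blocks of the interleaving. -/
lemma pow_eblocks_le (n : ℕ) (hn : 1 ≤ n) (P : Set (ℕ → A)) (c L : ℕ) :
    (eblocks P c L).ncard ^ n ≤ blockCount (Interleave n P) (n * L) := by
  classical
  have hn0 : 0 < n := hn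
  have hlt : ∀ (r : Fin n) (j : Fin L), (r : ℕ) + (j : ℕ) * n < n * L := by
    intro r j
    have h1 : (j : ℕ) * n + n ≤ L * n := by
      have h2 : ((j : ℕ) + 1) * n ≤ L * n := Nat.mul_le_mul_right n j.2
      calc (j : ℕ) * n + n = ((j : ℕ) + 1) * n := by ring
        _ ≤ L * n := h2
    calc (r : ℕ) + (j : ℕ) * n < n + (j : ℕ) * n := by
          have := r.2; omega
      _ ≤ L * n := by omega
      _ = n * L := Nat.mul_comm L n
  have hdivL : ∀ i : Fin (n * L), (i : ℕ) / n < L := by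
    intro i
    rw [Nat.div_lt_iff_lt_mul hn0, Nat.mul_comm L n]
    exact i.2
  have hmodn : ∀ i : Fin (n * L), (i : ℕ) % n < n := fun i => Nat.mod_lt _ hn0
  have main : ∀ b : Fin n → (eblocks P c L),
      ∃ W : (blocks (Interleave n P) (n * L)),
      ∀ (r : Fin n) (j : Fin L),
        (W : Fin (n * L) → A) ⟨(r : ℕ) + (j : ℕ) * n, hlt r j⟩ = (b r : Fin L → A) j := by
    intro b
    have hb : ∀ r : Fin n, ∃ x, x ∈ P ∧ ∀ j : Fin L, x (c + (j : ℕ)) = (b r : Fin L → A) j := by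
      intro r
      obtain ⟨x, hxP, hxw⟩ := (b r).2
      exact ⟨x, hxP, hxw⟩
    choose x hxP hxw using hb
    set y : ℕ → A := fun t => x ⟨t % n, Nat.mod_lt _ hn0⟩ (t / n) with hy
    have hyQ : y ∈ Interleave n P := by
      intro j hj
      have he : (fun i => y (j + i * n)) = x ⟨j, hj⟩ := by
        funext i
        simp only [hy]
        congr 1
        · apply Fin.ext
          simp only []
          rw [Nat.add_mul_mod_self_right, Nat.mod_eq_of_lt hj]
        · rw [Nat.add_mul_div_right _ _ hn0, Nat.div_eq_of_lt hj]
          omega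
      rw [he]
      exact hxP ⟨j, hj⟩
    refine ⟨⟨fun i => (b ⟨(i : ℕ) % n, hmodn i⟩ : Fin L → A) ⟨(i : ℕ) / n, hdivL i⟩,
      y, hyQ, n * c, ?_⟩, ?_⟩
    · intro i
      simp only [hy]
      have e1 : (n * c + (i : ℕ)) % n = (i : ℕ) % n := by
        rw [Nat.mul_add_mod]
      have e2 : (n * c + (i : ℕ)) / n = c + (i : ℕ) / n := Nat.mul_add_div hn0 _ _
      simp only [e1, e2]
      exact hxw ⟨(i : ℕ) % n, hmodn i⟩ ⟨(i : ℕ) / n, hdivL i⟩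
    · intro r j
      simp only
      have e1 : ((r : ℕ) + (j : ℕ) * n) % n = (r : ℕ) := by
        rw [Nat.add_mul_mod_self_right, Nat.mod_eq_of_lt r.2]
      have e2 : ((r : ℕ) + (j : ℕ) * n) / n = (j : ℕ) := by
        rw [Nat.add_mul_div_right _ _ hn0, Nat.div_eq_of_lt r.2]
        omega
      simp only [e1, e2, Fin.eta]
  choose G hG using main
  have hinj : Function.Injective G := by
    intro b b' hbb
    funext r
    apply Subtype.ext
    funext j
    rw [← hG b r j, ← hG b' r j, hbb]
  have hcard := Nat.card_le_card_of_injective G hinj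
  rw [blockCount_eq, ← Nat.card_coe_set_eq, ← Nat.card_coe_set_eq]
  refine le_trans (le_of_eq ?_) hcard
  rw [Nat.card_fun]
  simp [Nat.card_eq_fintype_card]

/-- For a path set, the total block count is controlled by the block count at a single
position. -/
lemma pathset_exists_position {V : Type} [Fintype V] (E : Set (V × A × V)) (v0 : V) (L : ℕ) :
    ∃ c, blockCount (PathSetOf E v0) L ≤
      2 ^ Fintype.card V * (eblocks (PathSetOf E v0) c L).ncard := by
  classical
  set P := PathSetOf E v0 with hP
  set R : ℕ → Set V := fun c =>
    {u | ∃ (x : ℕ → A) (v : ℕ → V), v 0 = v0 ∧ (∀ i, (v i, x i, v (i + 1)) ∈ E) ∧ v c = u}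
    with hR
  have splice : ∀ c c', R c = R c' → eblocks P c L ⊆ eblocks P c' L := by
    intro c c' hcc w hw
    obtain ⟨x, hx, hxw⟩ := hw
    obtain ⟨v, hv0, hvE⟩ := hx
    have hu : v c ∈ R c := ⟨x, v, hv0, hvE, rfl⟩
    rw [hcc] at hu
    obtain ⟨x2, v2, hv20, hv2E, hv2c⟩ := hu
    set x3 : ℕ → A := fun t => if t < c' then x2 t else x (t - c' + c) with hx3
    set v3 : ℕ → V := fun t => if t < c' then v2 t else v (t - c' + c) with hv3
    have hx3P : x3 ∈ P := by
      refine ⟨v3, ?_, ?_⟩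
      · by_cases h0 : 0 < c'
        · simp only [hv3, if_pos h0]; exact hv20
        · have hc0 : c' = 0 := by omega
          have h5 : v2 0 = v c := by rw [← hv2c, hc0]
          have h6 : v3 0 = v c := by
            simp only [hv3, hc0]
            rw [if_neg (lt_irrefl 0)]
            norm_num
          rw [h6, ← h5]
          exact hv20
      · intro i
        by_cases h1 : i + 1 < c'
        · have h2 : i < c' := by omega
          simp only [hx3, hv3, if_pos h1, if_pos h2]
          exact hv2E i
        · by_cases h2 : i < c'
          · have h3 : i + 1 = c' := by omega
            simp only [hx3, hv3, if_pos h2, if_neg h1]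
            have e1 : i + 1 - c' + c = c := by omega
            rw [e1]
            rw [← hv2c, ← h3]
            exact hv2E i
          · simp only [hx3, hv3, if_neg h2, if_neg h1]
            have e1 : i + 1 - c' + c = (i - c' + c) + 1 := by omega
            rw [e1]
            exact hvE (i - c' + c)
    refine ⟨x3, hx3P, fun i => ?_⟩
    simp only [hx3]
    have h4 : ¬ (c' + (i : ℕ) < c') := by omega
    rw [if_neg h4]
    have e2 : c' + (i : ℕ) - c' + c = c + (i : ℕ) := by omega
    rw [e2]
    exact hxw i
  set g : Set V → ℕ := fun S => if h : ∃ c, R c = S then h.choose else 0 with hg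
  have hgR : ∀ m : ℕ, R (g (R m)) = R m := by
    intro m
    have hS : ∃ c, R c = R m := ⟨m, rfl⟩
    simp only [hg, dif_pos hS]
    exact hS.choose_spec
  have cover : blocks P L ⊆ ⋃ S : Set V, eblocks P (g S) L := by
    intro w hw
    obtain ⟨x, hx, m, hxw⟩ := hw
    have hwm : w ∈ eblocks P m L := ⟨x, hx, hxw⟩
    have : w ∈ eblocks P (g (R m)) L :=
      splice m (g (R m)) (hgR m).symm hwm
    exact Set.mem_iUnion.2 ⟨R m, this⟩
  have h1 : (blocks P L).ncard ≤ ∑ S : Set V, (eblocks P (g S) L).ncard := by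
    refine (Set.ncard_le_ncard cover (Set.toFinite _)).trans ?_
    have he : (⋃ S : Set V, eblocks P (g S) L)
        = ↑(Finset.univ.biUnion fun S : Set V => (eblocks P (g S) L).toFinite.toFinset) := by
      ext w
      constructor
      · intro hw
        rcases Set.mem_iUnion.1 hw with ⟨S, hS⟩
        exact Finset.mem_coe.2 (Finset.mem_biUnion.2
          ⟨S, Finset.mem_univ _, (Set.Finite.mem_toFinset _).2 hS⟩)
      · intro hw
        rcases Finset.mem_biUnion.1 (Finset.mem_coe.1 hw) with ⟨S, -, hS⟩
        exact Set.mem_iUnion.2 ⟨S, (Set.Finite.mem_toFinset _).1 hS⟩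
    rw [he, Set.ncard_coe_finset]
    refine Finset.card_biUnion_le.trans ?_
    refine Finset.sum_le_sum fun S _ => ?_
    rw [Set.ncard_eq_toFinset_card _ ((eblocks P (g S) L).toFinite)]
  obtain ⟨S0, -, hS0⟩ := Finset.exists_max_image (Finset.univ : Finset (Set V))
    (fun S => (eblocks P (g S) L).ncard) ⟨∅, Finset.mem_univ _⟩
  refine ⟨g S0, ?_⟩
  rw [blockCount_eq]
  refine h1.trans ?_
  calc ∑ S : Set V, (eblocks P (g S) L).ncard
      ≤ (Finset.univ : Finset (Set V)).card * (eblocks P (g S0) L).ncard := by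
        rw [← smul_eq_mul]
        exact Finset.sum_le_card_nsmul _ _ _ fun S _ => hS0 S (Finset.mem_univ S)
    _ = 2 ^ Fintype.card V * (eblocks P (g S0) L).ncard := by
        rw [Finset.card_univ, Fintype.card_set]

/-- Generic limsup comparison. -/
lemma limsup_le_aux {f g : ℕ → ℝ} {B D : ℝ}
    (hf0 : ∀ k, 0 ≤ f k) (hg0 : ∀ k, 0 ≤ g k) (hgB : ∀ k, g k ≤ B)
    {u : ℕ → ℕ} (hu : Filter.Tendsto u Filter.atTop Filter.atTop)
    (h : ∀ k, 1 ≤ k → f k ≤ g (u k) + D / k) :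
    Filter.limsup f Filter.atTop ≤ Filter.limsup g Filter.atTop := by
  have hgcomp_bdd : Filter.IsBoundedUnder (· ≤ ·) Filter.atTop (fun k => g (u k)) :=
    Filter.isBoundedUnder_of ⟨B, fun k => hgB _⟩
  have hgcomp_cob : Filter.IsCoboundedUnder (· ≤ ·) Filter.atTop (fun k => g (u k)) :=
    Filter.isCoboundedUnder_le_of_le _ (fun k => hg0 _)
  refine le_of_forall_pos_le_add fun δ hδ => ?_
  have hev : ∀ᶠ k in Filter.atTop, f k ≤ g (u k) + δ := by
    have h1 : Filter.Tendsto (fun k : ℕ => D / k) Filter.atTop (nhds 0) :=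
      tendsto_const_div_atTop_nhds_zero_nat D
    filter_upwards [h1.eventually_le_const hδ, Filter.eventually_ge_atTop 1] with k hk hk1
    linarith [h k hk1]
  have step1 : Filter.limsup f Filter.atTop ≤
      Filter.limsup (fun k => g (u k) + δ) Filter.atTop :=
    Filter.limsup_le_limsup hev
      (Filter.isCoboundedUnder_le_of_le _ fun k => hf0 k)
      (Filter.isBoundedUnder_of ⟨B + δ, fun k => by linarith [hgB (u k)]⟩)
  have step2 : Filter.limsup (fun k => g (u k) + δ) Filter.atTop
      = Filter.limsup (fun k => g (u k)) Filter.atTop + δ :=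
    limsup_add_const Filter.atTop (fun k => g (u k)) δ hgcomp_bdd hgcomp_cob
  have step3 : Filter.limsup (fun k => g (u k)) Filter.atTop ≤ Filter.limsup g Filter.atTop := by
    have e1 : Filter.limsup (fun k => g (u k)) Filter.atTop
        = Filter.limsup g (Filter.map u Filter.atTop) := by
      rw [Filter.limsup, Filter.limsup, Filter.map_map]
      rfl
    rw [e1]
    exact Filter.limsup_le_limsup_of_le hu
      (Filter.isCoboundedUnder_le_of_le _ fun k => hg0 k)
      (Filter.isBoundedUnder_of ⟨B, fun k => hgB k⟩)
  linarith

end HtopAux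

/-- Interleaving preserves topological entropy of path sets. -/
theorem Htop_interleave {A : Type} [Fintype A] (n : ℕ) (hn : 1 ≤ n)
    (P : Set (ℕ → A)) (hP : IsPathSet P) :
    Htop (Interleave n P) = Htop P := by
  classical
  obtain ⟨V, _instV, v0, E, rfl⟩ := hP
  by_cases hne : (PathSetOf E v0).Nonempty
  · set PS := PathSetOf E v0 with hPS
    have hn0 : 0 < n := hn
    have hQne : (Interleave n PS).Nonempty := HtopAux.interleave_nonempty n hn hne
    have hA1 : 1 ≤ Fintype.card A := by
      obtain ⟨x, -⟩ := hne
      exact Fintype.card_pos_iff.2 ⟨x 0⟩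
    set B : ℝ := Real.log (Fintype.card A) with hB
    have hB0 : 0 ≤ B := Real.log_nonneg (by exact_mod_cast hA1)
    have hlog0 : ∀ (X : Set (ℕ → A)) (k : ℕ), X.Nonempty → 0 ≤ Real.log (blockCount X k) :=
      fun X k hX => Real.log_nonneg (by exact_mod_cast HtopAux.one_le_blockCount hX k)
    have hlogle : ∀ (X : Set (ℕ → A)) (k : ℕ), X.Nonempty →
        Real.log (blockCount X k) ≤ k * B := by
      intro X k hX
      have h1 : (blockCount X k : ℝ) ≤ ((Fintype.card A : ℝ)) ^ k := by
        exact_mod_cast HtopAux.blockCount_le_pow X k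
      have h2 : (0:ℝ) < (blockCount X k : ℝ) := by
        exact_mod_cast HtopAux.one_le_blockCount hX k
      calc Real.log (blockCount X k) ≤ Real.log ((Fintype.card A : ℝ) ^ k) :=
            Real.log_le_log h2 h1
        _ = k * B := by rw [Real.log_pow, hB]
    set fP : ℕ → ℝ := fun k => Real.log (blockCount PS k) / k with hfP
    set fQ : ℕ → ℝ := fun k => Real.log (blockCount (Interleave n PS) k) / k with hfQ
    have hfP0 : ∀ k, 0 ≤ fP k := fun k => div_nonneg (hlog0 PS k hne) (Nat.cast_nonneg k)
    have hfQ0 : ∀ k, 0 ≤ fQ k :=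
      fun k => div_nonneg (hlog0 (Interleave n PS) k hQne) (Nat.cast_nonneg k)
    have hfB : ∀ (X : Set (ℕ → A)), X.Nonempty → ∀ k : ℕ,
        Real.log (blockCount X k) / k ≤ B := by
      intro X hX k
      rcases Nat.eq_zero_or_pos k with rfl | hk
      · simpa using hB0
      · have hkpos : (0:ℝ) < (k:ℝ) := by exact_mod_cast hk
        rw [div_le_iff₀ hkpos]
        calc Real.log (blockCount X k) ≤ k * B := hlogle X k hX
          _ = B * k := mul_comm _ _
    have hfPB : ∀ k, fP k ≤ B := fun k => hfB PS hne k
    have hfQB : ∀ k, fQ k ≤ B := fun k => hfB (Interleave n PS) hQne k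
    have key1 : Filter.limsup fQ Filter.atTop ≤ Filter.limsup fP Filter.atTop := by
      refine HtopAux.limsup_le_aux (B := B) (D := Real.log n + 2 * n * B)
        hfQ0 hfP0 hfPB (u := fun k => k / n + 2) ?_ ?_
      · apply Filter.tendsto_atTop_atTop.2
        intro b
        refine ⟨b * n, fun a ha => ?_⟩
        have hba : b ≤ a / n := (Nat.le_div_iff_mul_le hn0).2 ha
        omega
      · intro k hk
        set L := k / n + 2 with hLdef
        have hNQ : (1:ℝ) ≤ (blockCount (Interleave n PS) k : ℝ) := by
          exact_mod_cast HtopAux.one_le_blockCount hQne k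
        have hNP : (1:ℝ) ≤ (blockCount PS L : ℝ) := by
          exact_mod_cast HtopAux.one_le_blockCount hne L
        have hcount : (blockCount (Interleave n PS) k : ℝ)
            ≤ (n:ℝ) * (blockCount PS L : ℝ) ^ n := by
          exact_mod_cast HtopAux.count_interleave_le n hn PS k
        have hlogQ : Real.log (blockCount (Interleave n PS) k)
            ≤ Real.log n + (n:ℝ) * Real.log (blockCount PS L) := by
          calc Real.log (blockCount (Interleave n PS) k)
              ≤ Real.log ((n:ℝ) * (blockCount PS L : ℝ) ^ n) :=
                Real.log_le_log (lt_of_lt_of_le one_pos hNQ) hcount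
            _ = Real.log n + (n:ℝ) * Real.log (blockCount PS L) := by
                rw [Real.log_mul (by positivity) (by positivity), Real.log_pow]
        have hkpos : (0:ℝ) < (k:ℝ) := by exact_mod_cast hk
        have hLpos : (0:ℝ) < (L:ℝ) := by
          rw [hLdef]
          exact_mod_cast Nat.add_pos_right (k / n) (by norm_num : (0:ℕ) < 2)
        have hlN0 : 0 ≤ Real.log (blockCount PS L) := hlog0 PS L hne
        have hlNle : Real.log (blockCount PS L) ≤ (L:ℝ) * B := hlogle PS L hne
        have hnL : (n:ℝ) * (L:ℝ) ≤ (k:ℝ) + 2 * n := by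
          have hnat : n * L ≤ k + 2 * n := by
            have h5 : k / n * n ≤ k := Nat.div_mul_le_self k n
            calc n * L = k / n * n + n * 2 := by rw [hLdef]; ring
              _ ≤ k + 2 * n := add_le_add h5 (Nat.le_of_eq (Nat.mul_comm n 2))
          exact_mod_cast hnat
        have hc0 : (0:ℝ) ≤ Real.log n := Real.log_nonneg (by exact_mod_cast hn)
        simp only [hfQ, hfP]
        set lN := Real.log (blockCount PS L) with hlNdef
        have ht : lN = lN / L * L := (div_mul_cancel₀ lN (ne_of_gt hLpos)).symm
        set t := lN / (L:ℝ) with htdef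
        have ht0 : 0 ≤ t := div_nonneg hlN0 (le_of_lt hLpos)
        have htB : t ≤ B := by
          rw [htdef, div_le_iff₀ hLpos]
          linarith [hlNle]
        rw [div_le_iff₀ hkpos]
        have expand : (t + (Real.log n + 2 * n * B) / k) * k
            = t * k + (Real.log n + 2 * (n:ℝ) * B) := by
          field_simp
        rw [expand]
        have h7 : (n:ℝ) * lN = t * ((n:ℝ) * (L:ℝ)) := by rw [ht]; ring
        nlinarith [mul_le_mul_of_nonneg_left hnL ht0,
          mul_le_mul_of_nonneg_left htB (by positivity : (0:ℝ) ≤ 2 * (n:ℝ))]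
    have key2 : Filter.limsup fP Filter.atTop ≤ Filter.limsup fQ Filter.atTop := by
      refine HtopAux.limsup_le_aux (B := B) (D := (Fintype.card V : ℝ) * Real.log 2)
        hfP0 hfQ0 hfQB (u := fun L => n * L) ?_ ?_
      · exact Filter.tendsto_atTop_atTop.2 fun b =>
          ⟨b, fun a ha => le_trans ha (Nat.le_mul_of_pos_left a hn0)⟩
      · intro L hL
        obtain ⟨c, hc⟩ := HtopAux.pathset_exists_position E v0 L
        rw [← hPS] at hc
        have hpow := HtopAux.pow_eblocks_le n hn PS c L
        have hNP1 : 1 ≤ blockCount PS L := HtopAux.one_le_blockCount hne L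
        have hEc1 : 1 ≤ (HtopAux.eblocks PS c L).ncard := by
          rcases Nat.eq_zero_or_pos (HtopAux.eblocks PS c L).ncard with h0 | h0
          · rw [h0, mul_zero] at hc; omega
          · exact h0
        have hNQ1 : 1 ≤ blockCount (Interleave n PS) (n * L) :=
          HtopAux.one_le_blockCount hQne _
        have hEpos : (0:ℝ) < ((HtopAux.eblocks PS c L).ncard : ℝ) := by exact_mod_cast hEc1
        have hlogP : Real.log (blockCount PS L)
            ≤ (Fintype.card V : ℝ) * Real.log 2 + Real.log ((HtopAux.eblocks PS c L).ncard) := by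
          have h1 : (blockCount PS L : ℝ)
              ≤ (2:ℝ) ^ (Fintype.card V) * ((HtopAux.eblocks PS c L).ncard : ℝ) := by
            exact_mod_cast hc
          calc Real.log (blockCount PS L)
              ≤ Real.log ((2:ℝ) ^ (Fintype.card V) * ((HtopAux.eblocks PS c L).ncard : ℝ)) :=
                Real.log_le_log (by exact_mod_cast hNP1) h1
            _ = (Fintype.card V : ℝ) * Real.log 2
                + Real.log ((HtopAux.eblocks PS c L).ncard) := by
                rw [Real.log_mul (by positivity) (ne_of_gt hEpos), Real.log_pow]
        have hlogE : (n:ℝ) * Real.log ((HtopAux.eblocks PS c L).ncard)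
            ≤ Real.log (blockCount (Interleave n PS) (n * L)) := by
          have h1 : (((HtopAux.eblocks PS c L).ncard : ℝ)) ^ n
              ≤ (blockCount (Interleave n PS) (n * L) : ℝ) := by
            exact_mod_cast hpow
          calc (n:ℝ) * Real.log ((HtopAux.eblocks PS c L).ncard)
              = Real.log ((((HtopAux.eblocks PS c L).ncard : ℝ)) ^ n) := by
                rw [Real.log_pow]
            _ ≤ _ := Real.log_le_log (by positivity) h1
        simp only [hfP, hfQ]
        have hLpos : (0:ℝ) < (L:ℝ) := by exact_mod_cast hL
        have hnpos : (0:ℝ) < (n:ℝ) := by exact_mod_cast hn0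
        have hcast : ((n * L : ℕ) : ℝ) = (n:ℝ) * (L:ℝ) := by push_cast; ring
        rw [hcast]
        have h8 : Real.log ((HtopAux.eblocks PS c L).ncard)
            ≤ Real.log (blockCount (Interleave n PS) (n * L)) / n := by
          rw [le_div_iff₀ hnpos]
          linarith [hlogE]
        have h9 : Real.log (blockCount PS L) / L
            ≤ ((Fintype.card V : ℝ) * Real.log 2
              + Real.log (blockCount (Interleave n PS) (n * L)) / n) / L := by
          gcongr
          linarith [hlogP, h8]
        refine h9.trans (le_of_eq ?_)
        field_simp
        ring
    show Filter.limsup fQ Filter.atTop = Filter.limsup fP Filter.atTop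
    exact le_antisymm key1 key2
  · rw [Set.not_nonempty_iff_eq_empty] at hne
    rw [hne]
    have h0 : Interleave n (∅ : Set (ℕ → A)) = ∅ :=
      Set.eq_empty_iff_forall_notMem.2 fun x hx => Set.notMem_empty _ (hx 0 hn)
    rw [h0]

end
end

section
/- Let Q_k = 3^{2k} − 3^k + 1. For every integer k ≥ 1, the set X(1, Q_k) of 3-adic digit sequences of elements of C(1, Q_k) equals the k-interleaving of the digit-sequence set of C(1, 7): X(1, Q_k) = X(1, 7)^{(*k)} as subsets of {0,1,2}^ℕ. -/
open MeasureTheory ENNReal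

noncomputable section

/-- `X1 M = X(1, M)`: the set of 3-adic digit sequences (valued in {0,1,2}) of
elements of C(1, M). -/
def X1 (M : ℕ) : Set (ℕ → Fin 3) :=
  {a | (∑' i, ((a i : ℕ) : ℤ_[3]) * 3 ^ i) ∈ C1 M}

/-!
Write `x = ∑ aᵢ 3ⁱ` with `aᵢ ∈ {0,1}`. Since `Q_k = 1 - 3^k + 3^{2k}`, the product `Q_k x` is the
series with integer coefficients `cᵢ = aᵢ - a_{i-k} + a_{i-2k} ∈ [-1, 2]`. A 3-adic series whose
coefficients lie in a window of width less than 3 determines its coefficients, so `Q_k x ∈ Σ`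
exactly when every `cᵢ ∈ {0,1}`. The coefficient `cᵢ` only involves indices congruent to `i`
modulo `k`, and along each residue class it is the coefficient for `k = 1`, where `Q_1 = 7`.
-/

section DigitSeries

variable (p : ℕ) [Fact p.Prime]

def digitSeries (u : ℕ → ℤ) : ℤ_[p] :=
  ∑' i, (u i : ℤ_[p]) * (p : ℤ_[p]) ^ i

variable {p}

lemma summable_digitSeries (u : ℕ → ℤ) :
    Summable fun i => (u i : ℤ_[p]) * (p : ℤ_[p]) ^ i := by
  have hp : (1 : ℝ) < p := by exact_mod_cast (Fact.out : p.Prime).one_lt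
  refine Summable.of_norm_bounded
    (summable_geometric_of_lt_one (by positivity) (inv_lt_one_of_one_lt₀ hp)) fun i => ?_
  rw [norm_mul, norm_pow, PadicInt.norm_p]
  exact mul_le_of_le_one_left (by positivity) (PadicInt.norm_le_one _)

lemma digitSeries_add (u v : ℕ → ℤ) :
    digitSeries p u + digitSeries p v = digitSeries p (u + v) := by
  simp only [digitSeries, ← (summable_digitSeries u).tsum_add (summable_digitSeries v),
    Pi.add_apply, Int.cast_add, add_mul]

lemma digitSeries_sub (u v : ℕ → ℤ) :
    digitSeries p u - digitSeries p v = digitSeries p (u - v) := by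
  simp only [digitSeries, ← (summable_digitSeries u).tsum_sub (summable_digitSeries v),
    Pi.sub_apply, Int.cast_sub, sub_mul]

lemma digitSeries_eq_head_add_mul_tail (u : ℕ → ℤ) :
    digitSeries p u = u 0 + p * digitSeries p (fun i => u (i + 1)) := by
  rw [digitSeries, (summable_digitSeries u).tsum_eq_zero_add, digitSeries,
    ← (summable_digitSeries (p := p) _).tsum_mul_left]
  simp only [pow_zero, mul_one, pow_succ]
  congr 1
  exact tsum_congr fun i => by ring

lemma digitSeries_head_tail_eq_zero {d : ℕ → ℤ} (hd : |d 0| < p) (h : digitSeries p d = 0) :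
    d 0 = 0 ∧ digitSeries p (fun i => d (i + 1)) = 0 := by
  have hsplit := digitSeries_eq_head_add_mul_tail (p := p) d
  rw [h] at hsplit
  have h0 : d 0 = 0 := by
    have hmod := congrArg PadicInt.toZMod hsplit
    rw [map_zero, map_add, map_mul, map_intCast, map_natCast, ZMod.natCast_self, zero_mul,
      add_zero, eq_comm, ZMod.intCast_zmod_eq_zero_iff_dvd] at hmod
    exact Int.eq_zero_of_abs_lt_dvd hmod hd
  rw [h0, Int.cast_zero, zero_add, eq_comm] at hsplit
  exact ⟨h0, (mul_eq_zero.1 hsplit).resolve_left (Nat.cast_ne_zero.2 (Fact.out : p.Prime).ne_zero)⟩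

theorem eq_zero_of_digitSeries_eq_zero {d : ℕ → ℤ} (hd : ∀ i, |d i| < p)
    (h : digitSeries p d = 0) (i : ℕ) : d i = 0 := by
  induction i generalizing d with
  | zero => exact (digitSeries_head_tail_eq_zero (hd 0) h).1
  | succ i ih =>
    exact ih (fun i => hd (i + 1)) (digitSeries_head_tail_eq_zero (hd 0) h).2

theorem eq_of_digitSeries_eq {u v : ℕ → ℤ} (huv : ∀ i, |u i - v i| < p)
    (h : digitSeries p u = digitSeries p v) : u = v :=
  funext fun i => sub_eq_zero.1 <|
    eq_zero_of_digitSeries_eq_zero (d := u - v) huv (by rw [← digitSeries_sub, h, sub_self]) i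

def shiftSeq (m : ℕ) (u : ℕ → ℤ) (i : ℕ) : ℤ :=
  if m ≤ i then u (i - m) else 0

lemma pow_mul_digitSeries (m : ℕ) (u : ℕ → ℤ) :
    (p : ℤ_[p]) ^ m * digitSeries p u = digitSeries p (shiftSeq m u) := by
  induction m with
  | zero =>
    have hshift : shiftSeq 0 u = u := funext fun i => by simp [shiftSeq]
    rw [pow_zero, one_mul, hshift]
  | succ m ih =>
    have hhead : shiftSeq (m + 1) u 0 = 0 := by simp [shiftSeq]
    have htail : (fun i => shiftSeq (m + 1) u (i + 1)) = shiftSeq m u := by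
      funext i
      simp [shiftSeq]
    rw [digitSeries_eq_head_add_mul_tail (shiftSeq (m + 1) u), hhead, htail, pow_succ',
      mul_assoc, ih, Int.cast_zero, zero_add]

end DigitSeries

lemma shiftSeq_add_mul {k j : ℕ} (hj : j < k) (m : ℕ) (u : ℕ → ℤ) (i : ℕ) :
    shiftSeq (m * k) u (j + i * k) = shiftSeq m (fun l => u (j + l * k)) i := by
  unfold shiftSeq
  by_cases hmi : m ≤ i
  · have hsub : j + i * k - m * k = j + (i - m) * k := by
      rw [Nat.sub_mul, Nat.add_sub_assoc (Nat.mul_le_mul_right k hmi)]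
    rw [if_pos (by nlinarith), if_pos hmi, hsub]
  · rw [if_neg (by nlinarith), if_neg hmi]

lemma tsum_digits_eq_digitSeries (a : ℕ → ℕ) :
    ∑' i, (a i : ℤ_[3]) * 3 ^ i = digitSeries 3 (fun i => a i) := by
  simp [digitSeries]

lemma digitSeries_mem_Sigma3_iff {u : ℕ → ℤ} (hu : ∀ i, u i ∈ Set.Icc (-1) 2) :
    digitSeries 3 u ∈ Sigma3 ↔ ∀ i, u i ∈ Set.Icc 0 1 := by
  simp only [Set.mem_Icc] at hu ⊢
  constructor
  · rintro ⟨a, ha, hua⟩ i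
    rw [tsum_digits_eq_digitSeries] at hua
    have hbound : ∀ i, |u i - a i| < 3 := fun i => by
      have := ha i; have := hu i; rw [abs_lt]; omega
    have hi := congrFun (eq_of_digitSeries_eq hbound hua) i
    have := ha i
    omega
  · intro h
    refine ⟨fun i => (u i).toNat, fun i => by dsimp only; have := h i; omega, ?_⟩
    rw [tsum_digits_eq_digitSeries]
    congr
    funext i
    have := h i; omega

def qDigits (k : ℕ) (u : ℕ → ℤ) : ℕ → ℤ :=
  u - shiftSeq k u + shiftSeq (2 * k) u

lemma Qk_mul_digitSeries (k : ℕ) (u : ℕ → ℤ) :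
    ((3 ^ (2 * k) - 3 ^ k + 1 : ℕ) : ℤ_[3]) * digitSeries 3 u = digitSeries 3 (qDigits k u) := by
  have hle : 3 ^ k ≤ 3 ^ (2 * k) := Nat.pow_le_pow_right (by norm_num) (by omega)
  rw [qDigits, ← digitSeries_add, ← digitSeries_sub, ← pow_mul_digitSeries, ← pow_mul_digitSeries]
  push_cast [Nat.cast_sub hle]
  ring

lemma qDigits_add_mul {k j : ℕ} (hj : j < k) (u : ℕ → ℤ) (i : ℕ) :
    qDigits k u (j + i * k) = qDigits 1 (fun l => u (j + l * k)) i := by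
  simp only [qDigits, Pi.add_apply, Pi.sub_apply]
  rw [← shiftSeq_add_mul hj, ← shiftSeq_add_mul hj, one_mul]

theorem mem_X1_Qk_iff (k : ℕ) (a : ℕ → Fin 3) :
    a ∈ X1 (3 ^ (2 * k) - 3 ^ k + 1) ↔
      ∀ i, ((a i : ℕ) : ℤ) ∈ Set.Icc 0 1 ∧ qDigits k (fun i => a i) i ∈ Set.Icc 0 1 := by
  have ha : ∀ i, ((a i : ℕ) : ℤ) ∈ Set.Icc (-1) 2 := fun i => by
    have := (a i).isLt; simp only [Set.mem_Icc]; omega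
  rw [X1, Set.mem_ofPred_eq, C1, Set.mem_ofPred_eq, tsum_digits_eq_digitSeries,
    Qk_mul_digitSeries, digitSeries_mem_Sigma3_iff ha, forall_and]
  refine and_congr_right fun hbits => digitSeries_mem_Sigma3_iff fun i => ?_
  have := hbits i; have := hbits (i - k); have := hbits (i - 2 * k)
  simp only [Set.mem_Icc, qDigits, shiftSeq, Pi.add_apply, Pi.sub_apply] at *
  split_ifs <;> omega

lemma forall_iff_forall_add_mul {n : ℕ} (hn : 0 < n) {P : ℕ → Prop} :
    (∀ m, P m) ↔ ∀ j < n, ∀ i, P (j + i * n) :=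
  ⟨fun h _ _ _ => h _, fun h m => by
    simpa only [Nat.mod_add_div'] using h (m % n) (Nat.mod_lt m hn) (m / n)⟩

/-- For every k ≥ 1, X(1, Q_k) = X(1, 7)^{(*k)}, where Q_k = 3^{2k} − 3^k + 1. -/
theorem X1_Qk_eq_interleave (k : ℕ) (hk : 1 ≤ k) :
    X1 (3 ^ (2 * k) - 3 ^ k + 1) = Interleave k (X1 7) := by
  ext a
  rw [Interleave, Set.mem_ofPred_eq, mem_X1_Qk_iff, forall_iff_forall_add_mul hk]
  refine forall₂_congr fun j hj => ?_
  rw [show X1 7 = X1 (3 ^ (2 * 1) - 3 ^ 1 + 1) from rfl, mem_X1_Qk_iff]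
  simp only [qDigits_add_mul hj]

end
end

section
/- Let N_k = 3^k + 1 and P_k = 2·3^k + 1. For every integer k ≥ 1, the triple intersection is trivial: C(1, N_k, P_k) = {x ∈ ℤ₃ : x ∈ Σ, N_k·x ∈ Σ, and P_k·x ∈ Σ} = {0}. In particular dim_H(C(1, N_k, P_k)) = 0. -/
/-!
An element of `Σ` has all its residues modulo `3 ^ n` below `3 ^ n / 2`, and `3 * z ∈ Σ` forces
`z ∈ Σ`. So if `x ∈ C(1, N_k, P_k)` is divisible by `3`, then `x / 3` lies in the same set;
`x ≡ 2 [mod 3]` is excluded by `Σ` itself, and for `x ≡ 1 [mod 3]` the residues of `N_k * x`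
and `P_k * x` modulo `3 ^ (k + 1)` cannot both be small. Hence every element is divisible by all
powers of `3`, i.e. is `0`.
-/

open MeasureTheory ENNReal

noncomputable section

namespace PadicInt

variable {p : ℕ} [Fact p.Prime]

theorem eq_zero_of_forall_pow_dvd {x : ℤ_[p]} (h : ∀ n, (p : ℤ_[p]) ^ n ∣ x) : x = 0 := by
  by_contra hx
  have := (mem_span_pow_iff_le_valuation x hx (x.valuation + 1)).1
    (Ideal.mem_span_singleton.2 (h _))
  omega

theorem eq_zero_of_mem_of_forall_exists_p_mul {S : Set ℤ_[p]}
    (hS : ∀ x ∈ S, ∃ y ∈ S, x = p * y) {x : ℤ_[p]} (hx : x ∈ S) : x = 0 := by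
  refine eq_zero_of_forall_pow_dvd fun n => ?_
  induction n generalizing x with
  | zero => exact one_dvd x
  | succ n ih =>
    obtain ⟨y, hy, rfl⟩ := hS x hx
    rw [pow_succ']
    exact mul_dvd_mul_left _ (ih hy)

theorem natCast_eq_of_add_pow_mul_eq {m₁ m₂ n : ℕ} (h₁ : m₁ < p ^ n) (h₂ : m₂ < p ^ n)
    {u v : ℤ_[p]} (h : (m₁ : ℤ_[p]) + p ^ n * u = m₂ + p ^ n * v) : m₁ = m₂ := by
  have hpn : toZModPow n ((p : ℤ_[p]) ^ n) = 0 := by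
    rw [map_pow, map_natCast, ← Nat.cast_pow, ZMod.natCast_self]
  have := congrArg (toZModPow n) h
  simp only [map_add, map_mul, map_natCast, hpn, zero_mul, add_zero] at this
  rwa [ZMod.natCast_eq_natCast_iff', Nat.mod_eq_of_lt h₁, Nat.mod_eq_of_lt h₂] at this

end PadicInt

namespace Sigma3

theorem summable_natCast_mul_three_pow (a : ℕ → ℕ) :
    Summable fun i => (a i : ℤ_[3]) * 3 ^ i := by
  have h3 : ‖(3 : ℤ_[3])‖ < 1 := by
    rw [show (3 : ℤ_[3]) = (3 : ℕ) by norm_cast, PadicInt.norm_p]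
    norm_num
  refine .of_norm_bounded (summable_geometric_of_lt_one (norm_nonneg _) h3) fun i => ?_
  rw [norm_mul, norm_pow]
  exact mul_le_of_le_one_left (by positivity) (PadicInt.norm_le_one _)

theorem zero_mem : (0 : ℤ_[3]) ∈ Sigma3 :=
  ⟨fun _ => 0, fun _ => zero_le_one, by simp⟩

theorem exists_eq_add_three_mul {x : ℤ_[3]} (hx : x ∈ Sigma3) :
    ∃ d : ℕ, d ≤ 1 ∧ ∃ t ∈ Sigma3, x = d + 3 * t := by
  obtain ⟨a, ha, rfl⟩ := hx
  have hs := summable_natCast_mul_three_pow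
  refine ⟨a 0, ha 0, _, ⟨fun i => a (i + 1), fun i => ha (i + 1), rfl⟩, ?_⟩
  rw [(hs a).tsum_eq_zero_add, ← (hs _).tsum_mul_left]
  simp only [pow_zero, mul_one, pow_succ]
  congr 1
  exact tsum_congr fun i => by ring

theorem exists_eq_natCast_add_three_pow_mul {x : ℤ_[3]} (hx : x ∈ Sigma3) (n : ℕ) :
    ∃ m : ℕ, 2 * m < 3 ^ n ∧ ∃ t ∈ Sigma3, x = m + 3 ^ n * t := by
  induction n with
  | zero => exact ⟨0, by simp, x, hx, by simp⟩
  | succ n ih =>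
    obtain ⟨m, hm, t, ht, rfl⟩ := ih
    obtain ⟨d, hd, t', ht', rfl⟩ := exists_eq_add_three_mul ht
    refine ⟨m + 3 ^ n * d, ?_, t', ht', by push_cast; ring⟩
    have : 3 ^ n * d ≤ 3 ^ n := mul_le_of_le_one_right (Nat.zero_le _) hd
    rw [pow_succ]
    omega

theorem two_mul_lt_of_eq_natCast_add {y u : ℤ_[3]} (hy : y ∈ Sigma3) {m n : ℕ}
    (hm : m < 3 ^ n) (h : y = m + 3 ^ n * u) : 2 * m < 3 ^ n := by
  obtain ⟨m', hm', t, -, rfl⟩ := exists_eq_natCast_add_three_pow_mul hy n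
  have := PadicInt.natCast_eq_of_add_pow_mul_eq (p := 3) (m₁ := m') (by omega) hm
    (by exact_mod_cast h)
  omega

theorem of_three_mul_mem {z : ℤ_[3]} (hz : 3 * z ∈ Sigma3) : z ∈ Sigma3 := by
  obtain ⟨d, hd, t, ht, h⟩ := exists_eq_add_three_mul hz
  have hd0 : 0 = d := PadicInt.natCast_eq_of_add_pow_mul_eq (p := 3) (n := 1) (by norm_num)
    (by omega) (by push_cast; simpa using h)
  subst hd0
  rw [Nat.cast_zero, zero_add] at h
  rwa [mul_left_cancel₀ (by norm_num) h]

end Sigma3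

def C1NkPk (k : ℕ) : Set ℤ_[3] :=
  {x | x ∈ Sigma3 ∧ ((3 ^ k + 1 : ℕ) : ℤ_[3]) * x ∈ Sigma3 ∧
    ((2 * 3 ^ k + 1 : ℕ) : ℤ_[3]) * x ∈ Sigma3}

namespace C1NkPk

/- Write `x = m + 3 ^ k * t` with `2 * m < 3 ^ k`. Modulo `3 ^ (k + 1)` the residues of
`N_k * (1 + 3 * x)` and `P_k * (1 + 3 * x)` are `1 + 3 * m + 3 ^ k` and `1 + 3 * m + 2 * 3 ^ k`;
both would have to be below `3 ^ (k + 1) / 2`, which is impossible. -/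
theorem one_add_three_mul_notMem {k : ℕ} {x : ℤ_[3]} (hx : x ∈ Sigma3) :
    1 + 3 * x ∉ C1NkPk k := by
  rintro ⟨-, hN, hP⟩
  obtain ⟨m, hm, t, -, rfl⟩ := Sigma3.exists_eq_natCast_add_three_pow_mul hx k
  have hN' := Sigma3.two_mul_lt_of_eq_natCast_add hN (m := 1 + 3 * m + 3 ^ k) (n := k + 1)
    (u := t + m + 3 ^ k * t) (by rw [pow_succ]; omega) (by push_cast; ring)
  have hP' := Sigma3.two_mul_lt_of_eq_natCast_add hP (m := 1 + 3 * m + 2 * 3 ^ k) (n := k + 1)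
    (u := t + 2 * m + 2 * 3 ^ k * t) (by rw [pow_succ]; omega) (by push_cast; ring)
  rw [pow_succ] at hN' hP'
  omega

theorem exists_three_mul {k : ℕ} {x : ℤ_[3]} (hx : x ∈ C1NkPk k) :
    ∃ y ∈ C1NkPk k, x = 3 * y := by
  obtain ⟨d, hd, y, hy, rfl⟩ := Sigma3.exists_eq_add_three_mul hx.1
  obtain rfl | rfl : d = 0 ∨ d = 1 := by omega
  · obtain ⟨-, hN, hP⟩ := hx
    rw [Nat.cast_zero, zero_add, mul_left_comm] at hN hP
    exact ⟨y, ⟨hy, Sigma3.of_three_mul_mem hN, Sigma3.of_three_mul_mem hP⟩, by simp⟩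
  · rw [Nat.cast_one] at hx
    exact (one_add_three_mul_notMem hy hx).elim

theorem eq_singleton_zero (k : ℕ) : C1NkPk k = {0} := by
  refine Set.eq_singleton_iff_unique_mem.2 ⟨?_, fun x hx => ?_⟩
  · simpa [C1NkPk] using Sigma3.zero_mem
  · exact PadicInt.eq_zero_of_mem_of_forall_exists_p_mul
      (fun y hy => by exact_mod_cast exists_three_mul hy) hx

end C1NkPk

theorem C1_Nk_Pk_eq_singleton_zero_general (k : ℕ) :
    {x : ℤ_[3] | x ∈ Sigma3 ∧ ((3 ^ k + 1 : ℕ) : ℤ_[3]) * x ∈ Sigma3 ∧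
        ((2 * 3 ^ k + 1 : ℕ) : ℤ_[3]) * x ∈ Sigma3} = {0} ∧
    dimH {x : ℤ_[3] | x ∈ Sigma3 ∧ ((3 ^ k + 1 : ℕ) : ℤ_[3]) * x ∈ Sigma3 ∧
        ((2 * 3 ^ k + 1 : ℕ) : ℤ_[3]) * x ∈ Sigma3} = 0 :=
  ⟨C1NkPk.eq_singleton_zero k,
    (congrArg dimH (C1NkPk.eq_singleton_zero k)).trans (dimH_singleton 0)⟩

/-- For every k ≥ 1, C(1, N_k, P_k) = {0}, where N_k = 3^k + 1 and P_k = 2·3^k + 1;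
in particular its Hausdorff dimension is 0. -/
theorem C1_Nk_Pk_eq_singleton_zero (k : ℕ) (hk : 1 ≤ k) :
    {x : ℤ_[3] | x ∈ Sigma3 ∧ ((3 ^ k + 1 : ℕ) : ℤ_[3]) * x ∈ Sigma3 ∧
        ((2 * 3 ^ k + 1 : ℕ) : ℤ_[3]) * x ∈ Sigma3} = {0} ∧
    dimH {x : ℤ_[3] | x ∈ Sigma3 ∧ ((3 ^ k + 1 : ℕ) : ℤ_[3]) * x ∈ Sigma3 ∧
        ((2 * 3 ^ k + 1 : ℕ) : ℤ_[3]) * x ∈ Sigma3} = 0 :=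
  C1_Nk_Pk_eq_singleton_zero_general k

end
end

section
/- Let N_k = 3^k + 1. For every integer k ≥ 1, the set X(1, N_k) of 3-adic digit sequences of elements of C(1, N_k) equals the k-interleaving of the digit-sequence set of C(1, 4): X(1, N_k) = X(1, 4)^{(*k)} as subsets of {0,1,2}^ℕ. -/
open MeasureTheory ENNReal

noncomputable section

/-!
For `x = ∑ aₙ 3ⁿ` with digits `aₙ ∈ {0,1}`, the product `(3ᵏ + 1) x = ∑ (aₙ + aₙ₋ₖ) 3ⁿ` has
digits at most 2, so by uniqueness of 3-adic expansions it lies in the Cantor set exactly when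
no two digits `1` of `x` are `k` apart. For `k = 1` this is the condition defining `X(1, 4)`,
and "no two `1`s at distance `k`" is the same as "no two adjacent `1`s" along each residue class
of indices modulo `k`.
-/

namespace PadicInt

variable {p : ℕ} [Fact p.Prime]

variable (p) in
/-- `∑ aᵢ pⁱ`, where the digits `aᵢ` need not be less than `p`. -/
def ofDigits_s18 (a : ℕ → ℕ) : ℤ_[p] :=
  ∑' i, (a i : ℤ_[p]) * p ^ i

theorem summable_ofDigits (a : ℕ → ℕ) : Summable fun i => (a i : ℤ_[p]) * p ^ i := by
  have hp : (1 : ℝ) < p := by exact_mod_cast (Fact.out : p.Prime).one_lt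
  refine Summable.of_norm_bounded
    (summable_geometric_of_lt_one (by positivity) (inv_lt_one_of_one_lt₀ hp)) fun i => ?_
  rw [norm_mul, norm_pow, norm_p]
  exact mul_le_of_le_one_left (by positivity) (norm_le_one _)

theorem ofDigits_eq_add (a : ℕ → ℕ) :
    ofDigits_s18 p a = a 0 + p * ofDigits_s18 p (fun i => a (i + 1)) := by
  rw [ofDigits_s18, (summable_ofDigits a).tsum_eq_zero_add, ofDigits_s18,
    ← (summable_ofDigits _).tsum_mul_left, pow_zero, mul_one]
  exact congrArg _ (tsum_congr fun i => by ring)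

theorem ofDigits_add_s18 (a b : ℕ → ℕ) : ofDigits_s18 p (a + b) = ofDigits_s18 p a + ofDigits_s18 p b := by
  rw [ofDigits_s18, ofDigits_s18, ofDigits_s18, ← (summable_ofDigits a).tsum_add (summable_ofDigits b)]
  exact tsum_congr fun i => by rw [Pi.add_apply]; push_cast; ring

theorem ofDigits_shift (k : ℕ) (a : ℕ → ℕ) :
    ofDigits_s18 p (fun n => if k ≤ n then a (n - k) else 0) = p ^ k * ofDigits_s18 p a := by
  induction k with
  | zero => simp
  | succ k ih =>
    rw [ofDigits_eq_add, pow_succ', mul_assoc, ← ih]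
    simp

theorem toZMod_ofDigits (a : ℕ → ℕ) : toZMod (ofDigits_s18 p a) = a 0 := by
  rw [ofDigits_eq_add, map_add, map_mul, map_natCast, map_natCast, ZMod.natCast_self,
    zero_mul, add_zero]

theorem head_eq_of_ofDigits_eq {a b : ℕ → ℕ} (ha : a 0 < p) (hb : b 0 < p)
    (h : ofDigits_s18 p a = ofDigits_s18 p b) : a 0 = b 0 := by
  have h0 := congrArg toZMod h
  rw [toZMod_ofDigits, toZMod_ofDigits, ZMod.natCast_eq_natCast_iff'] at h0
  rwa [Nat.mod_eq_of_lt ha, Nat.mod_eq_of_lt hb] at h0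

theorem ofDigits_injOn : Set.InjOn (ofDigits_s18 p) {a | ∀ i, a i < p} := by
  intro a ha b hb h
  funext n
  induction n generalizing a b with
  | zero => exact head_eq_of_ofDigits_eq (ha 0) (hb 0) h
  | succ n ih =>
    have hp : (p : ℤ_[p]) ≠ 0 := Nat.cast_ne_zero.mpr (Fact.out : p.Prime).ne_zero
    have h0 := head_eq_of_ofDigits_eq (ha 0) (hb 0) h
    rw [ofDigits_eq_add, ofDigits_eq_add b, h0] at h
    exact ih (fun i => ha (i + 1)) (fun i => hb (i + 1)) (mul_left_cancel₀ hp (add_left_cancel h))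

end PadicInt

open PadicInt

theorem ofDigits_mem_Sigma3_iff {a : ℕ → ℕ} (ha : ∀ i, a i ≤ 2) :
    ofDigits_s18 3 a ∈ Sigma3 ↔ ∀ i, a i ≤ 1 := by
  refine ⟨?_, fun h => ⟨a, h, rfl⟩⟩
  rintro ⟨b, hb, hab⟩
  rw [ofDigits_injOn (fun i => Nat.lt_succ_of_le (ha i))
    (fun i => Nat.lt_succ_of_le ((hb i).trans one_le_two)) hab]
  exact hb

theorem natCast_pow_add_one_mul_ofDigits (k : ℕ) (a : ℕ → ℕ) :
    ((3 ^ k + 1 : ℕ) : ℤ_[3]) * ofDigits_s18 3 a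
      = ofDigits_s18 3 (a + fun n => if k ≤ n then a (n - k) else 0) := by
  rw [ofDigits_add_s18, ofDigits_shift]
  push_cast
  ring

theorem mem_X1_pow_add_one_iff (k : ℕ) (a : ℕ → Fin 3) :
    a ∈ X1 (3 ^ k + 1) ↔ ∀ n, (a n : ℕ) + a (n + k) ≤ 1 := by
  set d : ℕ → ℕ := fun n => a n
  set c : ℕ → ℕ := d + fun n => if k ≤ n then d (n - k) else 0
  have hd : ∀ n, d n ≤ 2 := fun n => Nat.le_of_lt_succ (a n).isLt
  have hc_add : ∀ n, c (n + k) = d (n + k) + d n := fun n => by simp [c]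
  change ofDigits_s18 3 d ∈ Sigma3 ∧ ((3 ^ k + 1 : ℕ) : ℤ_[3]) * ofDigits_s18 3 d ∈ Sigma3 ↔ _
  rw [natCast_pow_add_one_mul_ofDigits, ofDigits_mem_Sigma3_iff hd]
  constructor
  · rintro ⟨hd1, hprod⟩ n
    have hc : ∀ n, c n ≤ 2 := fun n => by
      simp only [c, Pi.add_apply]
      split_ifs <;> linarith [hd1 n, hd1 (n - k)]
    rw [ofDigits_mem_Sigma3_iff hc] at hprod
    have hn := hprod (n + k)
    rwa [hc_add, add_comm] at hn
  · intro h
    have hd1 : ∀ n, d n ≤ 1 := fun n => (Nat.le_add_right _ _).trans (h n)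
    have hc1 : ∀ n, c n ≤ 1 := fun n => by
      by_cases hn : k ≤ n
      · obtain ⟨m, rfl⟩ := Nat.exists_eq_add_of_le' hn
        rw [hc_add, add_comm]
        exact h m
      · simpa [c, hn] using hd1 n
    exact ⟨hd1, (ofDigits_mem_Sigma3_iff fun n => (hc1 n).trans one_le_two).mpr hc1⟩

theorem interleave_setOf_forall_succ {A : Type*} (r : A → A → Prop) {k : ℕ} (hk : 0 < k) :
    Interleave k {x | ∀ n, r (x n) (x (n + 1))} = {x | ∀ n, r (x n) (x (n + k))} := by
  ext x
  simp only [Interleave, Set.mem_ofPred_eq, add_one_mul, ← add_assoc]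
  refine ⟨fun h n => ?_, fun h j _ i => h _⟩
  rw [← Nat.mod_add_div' n k]
  exact h _ (Nat.mod_lt n hk) _

/-- For every k ≥ 1, X(1, N_k) = X(1, 4)^{(*k)}, where N_k = 3^k + 1. -/
theorem X1_Nk_eq_interleave (k : ℕ) (hk : 1 ≤ k) :
    X1 (3 ^ k + 1) = Interleave k (X1 4) := by
  have hX : ∀ m, X1 (3 ^ m + 1) = {a | ∀ n, (a n : ℕ) + a (n + m) ≤ 1} :=
    fun m => Set.ext (mem_X1_pow_add_one_iff m)
  rw [show 4 = 3 ^ 1 + 1 by norm_num, hX, hX]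
  exact (interleave_setOf_forall_succ (fun u v : Fin 3 => (u : ℕ) + v ≤ 1) hk).symm

end
end
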